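/- arXiv:1610.02638 — 2 statements merged into one kernel-verified Lean document; each statement's English description precedes it below -/
import Mathlib

section
/- For every A ⊆ {1,…,n} with |A| ≥ 2, the Casimir operators satisfy the linear relation C_A = Σ_{{i,j}⊆A, i≠j} C_{ij} − (|A| − 2) Σ_{i∈A} C_i as operators on ℝ[x_1,…,x_n]. -/
open MvPolynomial Finset

noncomputable section

variable {n : ℕ}

/-- Reflection operator `r_i`. -/
def reflOp (i : Fin n) : Module.End ℝ (MvPolynomial (Fin n) ℝ) :=
  (MvPolynomial.aeval (fun j : Fin n => if j = i then -X i else X j)).toLinearMap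

/-- Division by the variable `x_i` (as a linear operator, discarding non-divisible terms). -/
def divXop (i : Fin n) : Module.End ℝ (MvPolynomial (Fin n) ℝ) where
  toFun p := p.divMonomial (Finsupp.single i 1)
  map_add' p q := by ext m; simp [coeff_divMonomial]
  map_smul' c p := by ext m; simp [coeff_divMonomial]

/-- The `i`-th `Z_2^n` Dunkl operator `T_i = ∂_i + μ_i x_i⁻¹ (1 - r_i)`. -/
def dunklT (μ : Fin n → ℝ) (i : Fin n) : Module.End ℝ (MvPolynomial (Fin n) ℝ) :=
  (pderiv i).toLinearMap + μ i • (divXop i * (1 - reflOp i))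

/-- The intermediate Laplace–Dunkl operator `Δ_A = Σ_{i∈A} T_i²`. -/
def lapD (μ : Fin n → ℝ) (A : Finset (Fin n)) : Module.End ℝ (MvPolynomial (Fin n) ℝ) :=
  ∑ i ∈ A, dunklT μ i ^ 2

/-- Multiplication by `‖x_A‖² = Σ_{i∈A} x_i²`. -/
def mulX2 (A : Finset (Fin n)) : Module.End ℝ (MvPolynomial (Fin n) ℝ) :=
  LinearMap.mulLeft ℝ (∑ i ∈ A, X i ^ 2)

/-- The Euler operator `E_A = Σ_{i∈A} x_i ∂_i`. -/
def eulerOp (A : Finset (Fin n)) : Module.End ℝ (MvPolynomial (Fin n) ℝ) :=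
  ∑ i ∈ A, LinearMap.mulLeft ℝ (X i) * (pderiv i).toLinearMap

/-- `γ_A = |A|/2 + Σ_{i∈A} μ_i`. -/
def gamA (μ : Fin n → ℝ) (A : Finset (Fin n)) : ℝ :=
  (A.card : ℝ) / 2 + ∑ i ∈ A, μ i

/-- The Casimir operator `C_A`. -/
def casOp (μ : Fin n → ℝ) (A : Finset (Fin n)) : Module.End ℝ (MvPolynomial (Fin n) ℝ) :=
  (1 / 4 : ℝ) • ((eulerOp A + gamA μ A • 1) ^ 2 - (2 : ℝ) • (eulerOp A + gamA μ A • 1)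
    - mulX2 A * lapD μ A)

end


open Finset

section Aux
variable {α : Type*} {M : Type*} [DecidableEq α] [AddCommMonoid M]

/-- Split a double sum into diagonal and off-diagonal parts. -/
lemma my_sum_diag_offDiag (s : Finset α) (F : α → α → M) :
    ∑ i ∈ s, ∑ j ∈ s, F i j
      = ∑ i ∈ s, F i i + ∑ p ∈ s.offDiag, F p.1 p.2 := by
  rw [← Finset.sum_product', ← Finset.diag_union_offDiag,
    Finset.sum_union (Finset.disjoint_diag_offDiag s)]
  congr 1
  rw [Finset.sum_diag]

/-- Each off-diagonal pair lies in exactly one 2-subset. -/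
lemma my_sum_pairs_offDiag (s : Finset α) (F : α → α → M) :
    ∑ B ∈ s.powersetCard 2, ∑ p ∈ B.offDiag, F p.1 p.2
      = ∑ p ∈ s.offDiag, F p.1 p.2 := by
  have key : ∀ B ∈ s.powersetCard 2, ∀ p : α × α, p ∈ B.offDiag → B = {p.1, p.2} := by
    intro B hB p hp
    rw [Finset.mem_powersetCard] at hB
    rw [Finset.mem_offDiag] at hp
    refine (Finset.eq_of_subset_of_card_le ?_ ?_).symm
    · intro x hx
      rcases Finset.mem_insert.mp hx with rfl | hx
      · exact hp.1
      · exact (Finset.mem_singleton.mp hx) ▸ hp.2.1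
    · rw [hB.2, Finset.card_pair hp.2.2]
  have hdisj : (↑(s.powersetCard 2) : Set (Finset α)).PairwiseDisjoint Finset.offDiag := by
    intro B hB B' hB' hne
    simp only [Function.onFun]
    rw [Finset.disjoint_left]
    intro p hp hp'
    exact hne ((key B hB p hp).trans (key B' hB' p hp').symm)
  rw [← Finset.sum_biUnion hdisj]
  congr 1
  ext p
  simp only [Finset.mem_biUnion, Finset.mem_offDiag, Finset.mem_powersetCard]
  constructor
  · rintro ⟨B, ⟨hBs, -⟩, h1, h2, h3⟩
    exact ⟨hBs h1, hBs h2, h3⟩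
  · rintro ⟨h1, h2, h3⟩
    refine ⟨{p.1, p.2}, ⟨?_, Finset.card_pair h3⟩, ?_, ?_, h3⟩
    · intro x hx
      rcases Finset.mem_insert.mp hx with rfl | hx
      · exact h1
      · exact (Finset.mem_singleton.mp hx) ▸ h2
    · exact Finset.mem_insert_self _ _
    · exact Finset.mem_insert_of_mem (Finset.mem_singleton_self _)

lemma my_count_pairs (s : Finset α) (i : α) (hi : i ∈ s) :
    ((s.powersetCard 2).filter (fun B => i ∈ B)).card = s.card - 1 := by
  have himg : (s.powersetCard 2).filter (fun B => i ∈ B)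
      = (s.erase i).image (fun j => ({i, j} : Finset α)) := by
    ext B
    simp only [Finset.mem_filter, Finset.mem_powersetCard, Finset.mem_image, Finset.mem_erase]
    constructor
    · rintro ⟨⟨hBs, hcard⟩, hiB⟩
      obtain ⟨a, b, hab, rfl⟩ := Finset.card_eq_two.mp hcard
      rcases Finset.mem_insert.mp hiB with hia | hb
      · subst hia
        exact ⟨b, ⟨hab.symm, hBs (Finset.mem_insert_of_mem (Finset.mem_singleton_self _))⟩, rfl⟩
      · have hbi : i = b := Finset.mem_singleton.mp hb
        subst hbi
        exact ⟨a, ⟨hab, hBs (Finset.mem_insert_self _ _)⟩, Finset.pair_comm i a⟩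
    · rintro ⟨j, ⟨hji, hjs⟩, rfl⟩
      refine ⟨⟨?_, Finset.card_pair (Ne.symm hji)⟩, Finset.mem_insert_self _ _⟩
      intro x hx
      rcases Finset.mem_insert.mp hx with rfl | hx
      · exact hi
      · exact (Finset.mem_singleton.mp hx) ▸ hjs
  rw [himg, Finset.card_image_of_injOn, Finset.card_erase_of_mem hi]
  intro j hj j' hj' h
  rw [Finset.mem_coe, Finset.mem_erase] at hj hj'
  have hmem : j ∈ ({i, j} : Finset α) := Finset.mem_insert_of_mem (Finset.mem_singleton_self _)
  rw [show ({i, j} : Finset α) = {i, j'} from h] at hmem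
  rcases Finset.mem_insert.mp hmem with rfl | hx
  · exact absurd rfl hj.1
  · exact Finset.mem_singleton.mp hx

lemma my_sum_pairs_diag (s : Finset α) (g : α → M) :
    ∑ B ∈ s.powersetCard 2, ∑ i ∈ B, g i = (s.card - 1) • ∑ i ∈ s, g i := by
  have h1 : ∀ B ∈ s.powersetCard 2, ∑ i ∈ B, g i = ∑ i ∈ s, if i ∈ B then g i else 0 := by
    intro B hB
    rw [Finset.mem_powersetCard] at hB
    rw [Finset.sum_ite_mem, Finset.inter_eq_right.mpr hB.1]
  rw [Finset.sum_congr rfl h1, Finset.sum_comm]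
  rw [Finset.smul_sum]
  refine Finset.sum_congr rfl fun i hi => ?_
  rw [← Finset.sum_filter, Finset.sum_const, my_count_pairs s i hi]
end Aux

noncomputable section
variable {n : ℕ}

/-- Singleton part of the Euler+constant operator. -/
def Gop (μ : Fin n → ℝ) (i : Fin n) : Module.End ℝ (MvPolynomial (Fin n) ℝ) :=
  eulerOp {i} + gamA μ {i} • 1

/-- Pairwise bilinear part of the Casimir operator. -/
def Fop (μ : Fin n → ℝ) (i j : Fin n) : Module.End ℝ (MvPolynomial (Fin n) ℝ) :=
  Gop μ i * Gop μ j - LinearMap.mulLeft ℝ (X i ^ 2) * dunklT μ j ^ 2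

lemma gamA_singleton (μ : Fin n → ℝ) (i : Fin n) : gamA μ {i} = 1 / 2 + μ i := by
  simp [gamA]

lemma sum_Gop (μ : Fin n → ℝ) (A : Finset (Fin n)) :
    ∑ i ∈ A, Gop μ i = eulerOp A + gamA μ A • 1 := by
  unfold Gop
  rw [Finset.sum_add_distrib]
  congr 1
  · unfold eulerOp
    exact Finset.sum_congr rfl fun i _ => Finset.sum_singleton _ _
  · rw [← Finset.sum_smul]
    congr 1
    simp only [gamA_singleton]
    rw [Finset.sum_add_distrib, Finset.sum_const, gamA, nsmul_eq_mul]
    ring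

lemma mulX2_eq_sum (A : Finset (Fin n)) :
    mulX2 A = ∑ i ∈ A, LinearMap.mulLeft ℝ (X i ^ 2 : MvPolynomial (Fin n) ℝ) := by
  refine LinearMap.ext fun p => ?_
  simp [mulX2, LinearMap.sum_apply, Finset.sum_mul]

/-- The Casimir operator expands as a double sum of pairwise parts. -/
lemma casOp_expand (μ : Fin n → ℝ) (A : Finset (Fin n)) :
    casOp μ A = (1 / 4 : ℝ) • ((∑ i ∈ A, ∑ j ∈ A, Fop μ i j)
      - (2 : ℝ) • ∑ i ∈ A, Gop μ i) := by
  rw [casOp, ← sum_Gop, sq, Finset.sum_mul_sum, mulX2_eq_sum, lapD, Finset.sum_mul_sum]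
  congr 1
  unfold Fop
  simp_rw [Finset.sum_sub_distrib]
  abel

end


/-- `C_A = Σ_{{i,j}⊆A} C_{ij} − (|A|−2) Σ_{i∈A} C_i` for `|A| ≥ 2`. -/
theorem casOp_sum_pairs {n : ℕ} (hn : 1 ≤ n) (μ : Fin n → ℝ) (hμ : ∀ i, 0 < μ i)
    (A : Finset (Fin n)) (hA : 2 ≤ A.card) :
    casOp μ A = ∑ B ∈ A.powersetCard 2, casOp μ B
      - ((A.card : ℝ) - 2) • ∑ i ∈ A, casOp μ {i} := by
  have h1 : (1 : ℕ) ≤ A.card := le_trans one_le_two hA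
  have hsing : ∑ i ∈ A, casOp μ {i}
      = (1 / 4 : ℝ) • ((∑ i ∈ A, Fop μ i i) - (2 : ℝ) • ∑ i ∈ A, Gop μ i) := by
    have he : ∀ i ∈ A, casOp μ {i}
        = (1 / 4 : ℝ) • (Fop μ i i - (2 : ℝ) • Gop μ i) := by
      intro i _
      rw [casOp_expand]
      simp
    rw [Finset.sum_congr rfl he, ← Finset.smul_sum, Finset.sum_sub_distrib, ← Finset.smul_sum]
  have hpairs : ∑ B ∈ A.powersetCard 2, casOp μ B
      = (1 / 4 : ℝ) • ((((A.card : ℝ) - 1) • ∑ i ∈ A, Fop μ i i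
          + ∑ p ∈ A.offDiag, Fop μ p.1 p.2)
        - (2 : ℝ) • (((A.card : ℝ) - 1) • ∑ i ∈ A, Gop μ i)) := by
    have he : ∀ B ∈ A.powersetCard 2, casOp μ B
        = (1 / 4 : ℝ) • ((∑ i ∈ B, Fop μ i i + ∑ p ∈ B.offDiag, Fop μ p.1 p.2)
          - (2 : ℝ) • ∑ i ∈ B, Gop μ i) := by
      intro B _
      rw [casOp_expand, my_sum_diag_offDiag]
    rw [Finset.sum_congr rfl he, ← Finset.smul_sum, Finset.sum_sub_distrib,
      Finset.sum_add_distrib, my_sum_pairs_offDiag, my_sum_pairs_diag, ← Finset.smul_sum,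
      my_sum_pairs_diag, ← Nat.cast_smul_eq_nsmul ℝ (A.card - 1),
      Nat.cast_sub h1, Nat.cast_one]
    rw [← Nat.cast_smul_eq_nsmul ℝ (A.card - 1), Nat.cast_sub h1, Nat.cast_one]
  rw [casOp_expand, my_sum_diag_offDiag, hpairs, hsing]
  set a := ∑ i ∈ A, Fop μ i i
  set b := ∑ p ∈ A.offDiag, Fop μ p.1 p.2
  set g := ∑ i ∈ A, Gop μ i
  set k := (A.card : ℝ)
  module
end

section
/- For pairwise distinct i, j, k ∈ {1,…,n}, the Dunkl angular momentum operators satisfy [L_{ij}, L_{jk}] = L_{ik}(1 + 2μ_j r_j) as operators on ℝ[x_1,…,x_n], where L_{ab} = x_a T_b − x_b T_a. -/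
open MvPolynomial Finset

/-! On monomials, `T_a x^m = c_a(m) x^(m - e_a)` with `c_a(m) = m_a + μ_a (1 - (-1)^m_a)`, and
`r_a x^m = (-1)^m_a x^m`. Hence the `x_a` commute, the `T_a` commute, `T_a` commutes with `x_b`
and `r_b` for `a ≠ b`, and `T_j x_j - x_j T_j = 1 + 2 μ_j r_j`, because
`c_j(m + e_j) - c_j(m) = 1 + 2 μ_j (-1)^m_j`. The identity is a formal consequence of these
relations in any ring: in the expansion of `[L_ij, L_jk]` only `[x_i T_j, x_j T_k]` and
`[x_j T_i, x_k T_j]` survive, and each contributes one commutator `[T_j, x_j]`. -/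

theorem MvPolynomial.linearMap_ext_monomial {σ R M : Type*} [CommSemiring R]
    [AddCommMonoid M] [Module R M] {f g : MvPolynomial σ R →ₗ[R] M}
    (h : ∀ m, f (monomial m 1) = g (monomial m 1)) : f = g :=
  linearMap_ext fun m => LinearMap.ext_ring (h m)

theorem MvPolynomial.X_mul_monomial {σ R : Type*} [CommSemiring R] (a : σ) (m : σ →₀ ℕ)
    (c : R) : X a * monomial m c = monomial (Finsupp.single a 1 + m) c := by
  rw [X, monomial_mul, one_mul]

theorem Finsupp.single_add_tsub_single_of_ne {α : Type*} {a b : α} (hab : a ≠ b) (k l : ℕ)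
    (m : α →₀ ℕ) : single a k + m - single b l = single a k + (m - single b l) := by
  classical
  ext x
  simp only [tsub_apply, add_apply, single_apply]
  split_ifs with ha hb <;> first | omega | exact absurd (ha.trans hb.symm) hab

theorem Finsupp.single_add_tsub_single_self {α : Type*} {a : α} {m : α →₀ ℕ}
    (h : m a ≠ 0) : single a 1 + (m - single a 1) = m :=
  add_tsub_cancel_of_le (single_le_iff.2 (Nat.one_le_iff_ne_zero.2 h))

variable {n : ℕ}

def dunklCoeff (μ : ℝ) (k : ℕ) : ℝ := k + μ * (1 - (-1) ^ k)

theorem dunklCoeff_zero (μ : ℝ) : dunklCoeff μ 0 = 0 := by simp [dunklCoeff]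

theorem dunklCoeff_succ (μ : ℝ) (k : ℕ) :
    dunklCoeff μ (k + 1) = dunklCoeff μ k + 1 + 2 * μ * (-1) ^ k := by
  simp only [dunklCoeff, pow_succ]; push_cast; ring

theorem reflOp_monomial (i : Fin n) (m : Fin n →₀ ℕ) (c : ℝ) :
    reflOp i (monomial m c) = monomial m ((-1) ^ m i * c) := by
  have hpow : ∀ j, (if j = i then -X i else X j : MvPolynomial (Fin n) ℝ) ^ m j
      = C (if j = i then (-1) ^ m j else 1) * X j ^ m j := by
    intro j
    split_ifs with h
    · rw [h, neg_pow, map_pow, map_neg, map_one]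
    · rw [map_one, one_mul]
  change aeval _ (monomial m c) = _
  rw [aeval_monomial, Finsupp.prod_pow, Finset.prod_congr rfl fun j _ => hpow j,
    Finset.prod_mul_distrib, ← map_prod, Finset.prod_ite_eq' Finset.univ i, if_pos (mem_univ i),
    ← Finsupp.prod_pow, ← monomial_eq, algebraMap_eq, C_mul_monomial, mul_comm]

theorem divXop_monomial {i : Fin n} {m : Fin n →₀ ℕ} (h : m i ≠ 0) (c : ℝ) :
    divXop i (monomial m c) = monomial (m - Finsupp.single i 1) c := by
  rw [← divMonomial_monomial_mul (Finsupp.single i 1) (monomial (m - Finsupp.single i 1) c),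
    monomial_mul, one_mul, Finsupp.single_add_tsub_single_self h]
  rfl

theorem dunklT_monomial (μ : Fin n → ℝ) (i : Fin n) (m : Fin n →₀ ℕ) (c : ℝ) :
    dunklT μ i (monomial m c)
      = monomial (m - Finsupp.single i 1) (dunklCoeff (μ i) (m i) * c) := by
  have hrefl : (1 - reflOp i) (monomial m c) = monomial m ((1 - (-1) ^ m i) * c) := by
    rw [LinearMap.sub_apply, Module.End.one_apply, reflOp_monomial, ← map_sub]; ring_nf
  simp only [dunklT, LinearMap.add_apply, LinearMap.smul_apply, Module.End.mul_apply,
    Derivation.coeFn_coe, pderiv_monomial, hrefl]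
  by_cases h : m i = 0
  · simp [h, dunklCoeff_zero]
  · rw [divXop_monomial h, smul_monomial, ← map_add, dunklCoeff, smul_eq_mul]; ring_nf

theorem commute_dunklT (μ : Fin n → ℝ) {a b : Fin n} (hab : a ≠ b) :
    Commute (dunklT μ a) (dunklT μ b) := by
  refine linearMap_ext_monomial fun m => ?_
  simp [dunklT_monomial, hab, hab.symm, tsub_right_comm, mul_comm]

theorem commute_dunklT_mulLeft_X (μ : Fin n → ℝ) {a b : Fin n} (hab : a ≠ b) :
    Commute (dunklT μ a) (LinearMap.mulLeft ℝ (X b)) := by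
  refine linearMap_ext_monomial fun m => ?_
  simp [dunklT_monomial, X_mul_monomial, hab, Finsupp.single_add_tsub_single_of_ne hab.symm]

theorem commute_reflOp_dunklT (μ : Fin n → ℝ) {a j : Fin n} (haj : a ≠ j) :
    Commute (reflOp j) (dunklT μ a) := by
  refine linearMap_ext_monomial fun m => ?_
  simp [reflOp_monomial, dunklT_monomial, haj, mul_comm]

theorem commute_mulLeft_X (a b : Fin n) :
    Commute (LinearMap.mulLeft ℝ (X a : MvPolynomial (Fin n) ℝ))
      (LinearMap.mulLeft ℝ (X b)) :=
  LinearMap.ext fun p => mul_left_comm (X a) (X b) p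

theorem X_mul_dunklT_monomial_self (μ : Fin n → ℝ) (j : Fin n) (m : Fin n →₀ ℕ)
    (c : ℝ) :
    X j * dunklT μ j (monomial m c) = monomial m (dunklCoeff (μ j) (m j) * c) := by
  rw [dunklT_monomial, X_mul_monomial]
  by_cases h : m j = 0
  · simp [h, dunklCoeff_zero]
  · rw [Finsupp.single_add_tsub_single_self h]

theorem dunklT_mul_mulLeft_X_self (μ : Fin n → ℝ) (j : Fin n) :
    dunklT μ j * LinearMap.mulLeft ℝ (X j)
      = LinearMap.mulLeft ℝ (X j) * dunklT μ j + (1 + (2 * μ j) • reflOp j) := by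
  refine linearMap_ext_monomial fun m => ?_
  simp only [Module.End.mul_apply, LinearMap.add_apply, LinearMap.mulLeft_apply,
    X_mul_dunklT_monomial_self]
  simp only [Module.End.one_apply, LinearMap.smul_apply, X_mul_monomial,
    dunklT_monomial, reflOp_monomial, add_tsub_cancel_left, Finsupp.add_apply,
    Finsupp.single_eq_same, smul_monomial, ← map_add, add_comm 1, dunklCoeff_succ]
  congr 1
  ring

theorem commutator_angularMomentum {ι R : Type*} [Ring R] (x T : ι → R) (S : R)
    (hx : ∀ a b, Commute (x a) (x b)) (hT : ∀ a b, a ≠ b → Commute (T a) (T b))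
    (hTx : ∀ a b, a ≠ b → Commute (T a) (x b)) {i j k : ι} (hij : i ≠ j) (hik : i ≠ k)
    (hjk : j ≠ k) (hTj : T j * x j = x j * T j + S) (hSi : Commute S (T i))
    (hSk : Commute S (T k)) :
    (x i * T j - x j * T i) * (x j * T k - x k * T j)
      - (x j * T k - x k * T j) * (x i * T j - x j * T i)
      = (x i * T k - x k * T i) * S := by
  have hij_jk : x i * T j * (x j * T k) - x j * T k * (x i * T j) = x i * T k * S :=
    calc _ = x i * (T j * x j) * T k - x j * (T k * x i) * T j := by noncomm_ring
      _ = x i * (x j * T j + S) * T k - x j * (x i * T k) * T j := by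
        rw [hTj, (hTx k i hik.symm).eq]
      _ = x i * x j * (T j * T k) - x j * x i * (T k * T j) + x i * (S * T k) := by
        noncomm_ring
      _ = x i * T k * S := by rw [(hx i j).eq, (hT j k hjk).eq, hSk.eq]; noncomm_ring
  have hji_kj : x j * T i * (x k * T j) - x k * T j * (x j * T i) = -(x k * T i * S) :=
    calc _ = x j * (T i * x k) * T j - x k * (T j * x j) * T i := by noncomm_ring
      _ = x j * (x k * T i) * T j - x k * (x j * T j + S) * T i := by
        rw [hTj, (hTx i k hik).eq]
      _ = x j * x k * (T i * T j) - x k * x j * (T j * T i) - x k * (S * T i) := by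
        noncomm_ring
      _ = -(x k * T i * S) := by rw [(hx j k).eq, (hT i j hij).eq, hSi.eq]; noncomm_ring
  have hij_kj : Commute (x i * T j) (x k * T j) :=
    ((hx i k).mul_right (hTx j i hij.symm).symm).mul_left
      ((hTx j k hjk).mul_right (Commute.refl _))
  have hji_jk : Commute (x j * T i) (x j * T k) :=
    ((Commute.refl _).mul_right (hTx k j hjk.symm).symm).mul_left
      ((hTx i j hij).mul_right (hT i k hik))
  calc _ = (x i * T j * (x j * T k) - x j * T k * (x i * T j))
        + (x j * T i * (x k * T j) - x k * T j * (x j * T i))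
        - (x i * T j * (x k * T j) - x k * T j * (x i * T j))
        - (x j * T i * (x j * T k) - x j * T k * (x j * T i)) := by noncomm_ring
    _ = _ := by rw [hij_jk, hji_kj, hij_kj.eq, hji_jk.eq]; noncomm_ring

theorem angular_momentum_comm_general {n : ℕ} (μ : Fin n → ℝ)
    (i j k : Fin n) (hij : i ≠ j) (hik : i ≠ k) (hjk : j ≠ k) :
    let L : Fin n → Fin n → Module.End ℝ (MvPolynomial (Fin n) ℝ) := fun a b =>
      LinearMap.mulLeft ℝ (X a) * dunklT μ b - LinearMap.mulLeft ℝ (X b) * dunklT μ a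
    L i j * L j k - L j k * L i j = L i k * (1 + (2 * μ j) • reflOp j) := by
  intro L
  have hS : ∀ a, a ≠ j → Commute (1 + (2 * μ j) • reflOp j) (dunklT μ a) := fun a ha =>
    (Commute.one_left _).add_left ((commute_reflOp_dunklT μ ha).smul_left _)
  exact commutator_angularMomentum (fun a => LinearMap.mulLeft ℝ (X a)) (dunklT μ) _
    commute_mulLeft_X (fun _ _ => commute_dunklT μ) (fun _ _ => commute_dunklT_mulLeft_X μ)
    hij hik hjk (dunklT_mul_mulLeft_X_self μ j) (hS i hij) (hS k hjk.symm)

/-- `[L_{ij}, L_{jk}] = L_{ik}(1 + 2μ_j r_j)` for the Dunkl angular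
momentum operators `L_{ab} = x_a T_b − x_b T_a`. -/
theorem angular_momentum_comm {n : ℕ} (hn : 1 ≤ n) (μ : Fin n → ℝ) (hμ : ∀ i, 0 < μ i)
    (i j k : Fin n) (hij : i ≠ j) (hik : i ≠ k) (hjk : j ≠ k) :
    let L : Fin n → Fin n → Module.End ℝ (MvPolynomial (Fin n) ℝ) := fun a b =>
      LinearMap.mulLeft ℝ (X a) * dunklT μ b - LinearMap.mulLeft ℝ (X b) * dunklT μ a
    L i j * L j k - L j k * L i j = L i k * (1 + (2 * μ j) • reflOp j) :=
  angular_momentum_comm_general μ i j k hij hik hjk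
end
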